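/- arXiv:1403.1012 — 3 statements merged into one kernel-verified Lean document; each statement's English description precedes it below -/
import Mathlib

section
/- Let (λ_i)_{i≥0} be a strictly increasing sequence of positive reals converging to a finite limit λ_*, set d_k = λ_{2k} − λ_{2k−1}, and assume ∑_{k=1}^∞ d_k < ∞. For each D > 0 there exists a summable sequence (M_i)_{i≥1} of nonnegative reals, depending only on (λ_i), λ_* and D, such that for every choice of real numbers (P_i)_{i≥1} with λ_{2i−1} ≤ P_i ≤ λ_{2i} for all i, and every μ ∈ ℂ with |μ − λ_*| ≥ D, one has |1 − ((P_i − μ)/(λ_* − μ))·E_i((λ_* − λ_{2i})/(λ_* − μ))| ≤ M_i for every i ≥ 1. In particular the series ∑_{i=1}^∞ |1 − ((P_i − μ)/(λ_* − μ))·E_i((λ_* − λ_{2i})/(λ_* − μ))| converges uniformly on {μ : |μ − λ_*| ≥ D}, uniformly with respect to all admissible choices of (P_i). -/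
/-!
Put `w = λ_* - μ`, `z = (λ_* - λ_{2i}) / w` and `a = (λ_* - P_i) / w`, so that the `i`-th factor
is `(1 - a) E_i(z)`. The exponent of `(1 - z) E_n(z) = exp (log (1 - z) + z + ⋯ + zⁿ / n)` is a tail
of the Taylor series of the logarithm, whence `‖1 - (1 - z) E_n(z)‖ ≤ 4 ‖z‖ ^ (n + 1)` and
`‖E_n(z)‖ ≤ 6` for `‖z‖ ≤ 1 / 2`. Once `λ_* - λ_{2i} ≤ D / 2` we have `‖z‖ ≤ 1 / 2` and
`‖a - z‖ ≤ d_i / D`, so the factor is within `4 · 2^{-(i+1)} + 6 d_i / D` of `1`; each of the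
finitely many remaining factors is bounded uniformly in `P` and `μ` by a crude estimate.
-/

open Filter

/-- The truncated exponential factor `E_n(z) = exp(z + z²/2 + ⋯ + zⁿ/n)`. -/
noncomputable def En (n : ℕ) (z : ℂ) : ℂ :=
  Complex.exp (∑ k ∈ Finset.Icc 1 n, z ^ k / (k : ℂ))

lemma logTaylor_succ_neg (n : ℕ) (z : ℂ) :
    Complex.logTaylor (n + 1) (-z) = -∑ k ∈ Finset.Icc 1 n, z ^ k / (k : ℂ) := by
  induction n with
  | zero => simp [Complex.logTaylor]
  | succ n ih =>
    have hsign : ((-1 : ℂ) ^ (n + 1 + 1)) * (-1) ^ (n + 1) = -1 := by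
      rw [pow_succ, mul_right_comm, ← pow_add, ← two_mul, pow_mul]; norm_num
    rw [Complex.logTaylor_succ, Pi.add_apply, ih, Finset.sum_Icc_succ_top (by omega), neg_add,
      neg_pow z, ← mul_assoc, hsign]
    ring

lemma En_eq_exp_neg_logTaylor (n : ℕ) (z : ℂ) :
    En n z = Complex.exp (-Complex.logTaylor (n + 1) (-z)) := by
  rw [En, logTaylor_succ_neg, neg_neg]

lemma one_sub_mul_En_eq_exp {z : ℂ} (hz : z ≠ 1) (n : ℕ) :
    (1 - z) * En n z = Complex.exp (Complex.log (1 + -z) - Complex.logTaylor (n + 1) (-z)) := by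
  rw [Complex.exp_sub, En_eq_exp_neg_logTaylor, Complex.exp_neg, ← sub_eq_add_neg,
    Complex.exp_log (sub_ne_zero.mpr hz.symm), div_eq_mul_inv]

lemma norm_one_sub_mul_En_le {z : ℂ} (hz : ‖z‖ ≤ 1 / 2) (n : ℕ) :
    ‖1 - (1 - z) * En n z‖ ≤ 4 * ‖z‖ ^ (n + 1) := by
  have hz1 : ‖z‖ < 1 := by linarith
  set u := Complex.log (1 + -z) - Complex.logTaylor (n + 1) (-z)
  have hu : ‖u‖ ≤ 2 * ‖z‖ ^ (n + 1) := by
    have h := Complex.norm_log_sub_logTaylor_le n (z := -z) (by rwa [norm_neg])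
    rw [norm_neg] at h
    refine h.trans ?_
    rw [div_le_iff₀ (by positivity)]
    have : (1 - ‖z‖)⁻¹ ≤ 2 := by rw [inv_le_comm₀ (by linarith) two_pos]; linarith
    have : (1 : ℝ) ≤ n + 1 := by linarith [n.cast_nonneg (α := ℝ)]
    have := pow_nonneg (norm_nonneg z) (n + 1)
    nlinarith
  have hu1 : ‖u‖ ≤ 1 := by
    linarith [pow_le_of_le_one (norm_nonneg z) hz1.le (Nat.add_one_ne_zero n)]
  have hz0 : z ≠ 1 := by rintro rfl; norm_num at hz
  rw [one_sub_mul_En_eq_exp hz0, ← norm_neg, neg_sub]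
  linarith [Complex.norm_exp_sub_one_le hu1]

lemma norm_En_le_six {z : ℂ} (hz : ‖z‖ ≤ 1 / 2) (n : ℕ) : ‖En n z‖ ≤ 6 := by
  have h1z : 1 / 2 ≤ ‖1 - z‖ := by
    have := norm_sub_norm_le (1 : ℂ) z
    rw [norm_one] at this; linarith
  have hprod : ‖(1 - z) * En n z‖ ≤ 3 := by
    have h := norm_sub_norm_le ((1 - z) * En n z) 1
    rw [norm_one, norm_sub_rev] at h
    linarith [norm_one_sub_mul_En_le hz n,
      pow_le_of_le_one (norm_nonneg z) (by linarith) (Nat.add_one_ne_zero n)]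
  rw [norm_mul] at hprod
  nlinarith [norm_nonneg (En n z)]

lemma norm_En_le {z : ℂ} {r : ℝ} (hz : ‖z‖ ≤ r) (n : ℕ) :
    ‖En n z‖ ≤ Real.exp (∑ k ∈ Finset.Icc 1 n, r ^ k / k) := by
  rw [En, Complex.norm_exp, Real.exp_le_exp]
  refine (Complex.re_le_norm _).trans <| (norm_sum_le _ _).trans <|
    Finset.sum_le_sum fun k _ => ?_
  rw [norm_div, norm_pow, Complex.norm_natCast]
  gcongr

lemma norm_one_sub_mul_En_le_add_norm_sub {a z : ℂ} (hz : ‖z‖ ≤ 1 / 2) (n : ℕ) :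
    ‖1 - (1 - a) * En n z‖ ≤ 4 * ‖z‖ ^ (n + 1) + 6 * ‖a - z‖ := by
  calc ‖1 - (1 - a) * En n z‖ = ‖(1 - (1 - z) * En n z) + (a - z) * En n z‖ := by ring_nf
    _ ≤ ‖1 - (1 - z) * En n z‖ + ‖a - z‖ * ‖En n z‖ := (norm_add_le _ _).trans_eq (by rw [norm_mul])
    _ ≤ 4 * ‖z‖ ^ (n + 1) + 6 * ‖a - z‖ := by
      rw [mul_comm 6]
      gcongr
      · exact norm_one_sub_mul_En_le hz n
      · exact norm_En_le_six hz n

lemma norm_one_sub_mul_En_le_of_norm_le {a z : ℂ} {r : ℝ} (ha : ‖a‖ ≤ r) (hz : ‖z‖ ≤ r) (n : ℕ) :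
    ‖1 - (1 - a) * En n z‖ ≤ 1 + (1 + r) * Real.exp (∑ k ∈ Finset.Icc 1 n, r ^ k / k) := by
  calc ‖1 - (1 - a) * En n z‖ ≤ ‖(1 : ℂ)‖ + ‖1 - a‖ * ‖En n z‖ := by
        rw [← norm_mul]; exact norm_sub_le _ _
    _ ≤ 1 + (1 + r) * Real.exp (∑ k ∈ Finset.Icc 1 n, r ^ k / k) := by
      have h1a : ‖1 - a‖ ≤ 1 + r := (norm_sub_le _ _).trans (by rw [norm_one]; linarith)
      rw [norm_one]
      gcongr
      · linarith [norm_nonneg a]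
      · exact norm_En_le hz n

lemma norm_ofReal_div_le {x D : ℝ} {w : ℂ} (hD : 0 < D) (hw : D ≤ ‖w‖) :
    ‖(x : ℂ) / w‖ ≤ |x| / D := by
  rw [norm_div, Complex.norm_real, Real.norm_eq_abs]
  exact div_le_div_of_nonneg_left (abs_nonneg x) hD hw

lemma ofReal_sub_div_eq (p s : ℝ) {μ : ℂ} (hμ : (s : ℂ) - μ ≠ 0) :
    ((p : ℂ) - μ) / ((s : ℂ) - μ) = 1 - ((s - p : ℝ) : ℂ) / ((s : ℂ) - μ) := by
  push_cast
  field_simp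
  ring

section Factor

variable {D s b c p : ℝ} {μ : ℂ}

lemma norm_one_sub_div_mul_En_le_of_near (hD : 0 < D) (hμ : D ≤ ‖μ - s‖) (hcp : c ≤ p)
    (hpb : p ≤ b) (hbs : b ≤ s) (hsb : s - b ≤ D / 2) (n : ℕ) :
    ‖1 - ((p : ℂ) - μ) / ((s : ℂ) - μ) * En n (((s : ℂ) - (b : ℂ)) / ((s : ℂ) - μ))‖
      ≤ 4 * (1 / 2) ^ (n + 1) + 6 * ((b - c) / D) := by
  rw [norm_sub_rev] at hμ
  have hw : (s : ℂ) - μ ≠ 0 := norm_pos_iff.mp (hD.trans_le hμ)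
  rw [ofReal_sub_div_eq p s hw, ← Complex.ofReal_sub]
  have hz : ‖((s - b : ℝ) : ℂ) / ((s : ℂ) - μ)‖ ≤ 1 / 2 := by
    refine (norm_ofReal_div_le hD hμ).trans ?_
    rw [abs_of_nonneg (by linarith), div_le_iff₀ hD]
    linarith
  have haz : ‖((s - p : ℝ) : ℂ) / ((s : ℂ) - μ) - ((s - b : ℝ) : ℂ) / ((s : ℂ) - μ)‖
      ≤ (b - c) / D := by
    rw [← sub_div, ← Complex.ofReal_sub]
    refine (norm_ofReal_div_le hD hμ).trans ?_
    rw [abs_of_nonneg (by linarith)]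
    exact div_le_div_of_nonneg_right (by linarith) hD.le
  refine (norm_one_sub_mul_En_le_add_norm_sub hz n).trans ?_
  gcongr

lemma norm_one_sub_div_mul_En_le (hD : 0 < D) (hμ : D ≤ ‖μ - s‖) (hcp : c ≤ p) (hps : p ≤ s)
    (hcb : c ≤ b) (hbs : b ≤ s) (n : ℕ) :
    ‖1 - ((p : ℂ) - μ) / ((s : ℂ) - μ) * En n (((s : ℂ) - (b : ℂ)) / ((s : ℂ) - μ))‖
      ≤ 1 + (1 + (s - c) / D) * Real.exp (∑ k ∈ Finset.Icc 1 n, ((s - c) / D) ^ k / k) := by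
  rw [norm_sub_rev] at hμ
  have hw : (s : ℂ) - μ ≠ 0 := norm_pos_iff.mp (hD.trans_le hμ)
  rw [ofReal_sub_div_eq p s hw, ← Complex.ofReal_sub]
  refine norm_one_sub_mul_En_le_of_norm_le ?_ ?_ n <;>
    refine (norm_ofReal_div_le hD hμ).trans ?_ <;>
    rw [abs_of_nonneg (by linarith)] <;> gcongr

end Factor

lemma exists_summable_bound_of_eventually_le {α : Type*} {p : ℕ → α → Prop} {f : ℕ → α → ℝ}
    {g : ℕ → ℝ} (hbdd : ∀ i, ∃ C, ∀ x, p i x → f i x ≤ C) (hg : Summable g)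
    (hg0 : ∀ i, 0 ≤ g i) (hfg : ∀ᶠ i in atTop, ∀ x, p i x → f i x ≤ g i) :
    ∃ M : ℕ → ℝ, Summable M ∧ (∀ i, 0 ≤ M i) ∧ ∀ i x, p i x → f i x ≤ M i := by
  choose C hC using hbdd
  obtain ⟨N, hN⟩ := eventually_atTop.mp hfg
  refine ⟨fun i => g i + if i < N then |C i| else 0,
    hg.add (summable_of_ne_finset_zero (s := Finset.range N) fun i hi => ?_),
    fun i => add_nonneg (hg0 i) (by split_ifs <;> positivity), fun i x hx => ?_⟩
  · rw [if_neg (by simpa using hi)]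
  · dsimp only
    split_ifs with hi
    · linarith [hC i x hx, le_abs_self (C i), hg0 i]
    · linarith [hN i (not_lt.mp hi) x hx]

theorem exists_summable_dominating_sequence_general
    (lam : ℕ → ℝ) (lamStar : ℝ) (hmono : StrictMono lam)
    (hlim : Tendsto lam atTop (nhds lamStar))
    (hd : Summable (fun k : ℕ => lam (2 * k + 2) - lam (2 * k + 1)))
    (D : ℝ) (hD : 0 < D) :
    ∃ M : ℕ → ℝ, Summable M ∧ (∀ i, 0 ≤ M i) ∧
      ∀ P : ℕ → ℝ, (∀ i : ℕ, lam (2 * i + 1) ≤ P (i + 1) ∧ P (i + 1) ≤ lam (2 * i + 2)) →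
        ∀ μ : ℂ, D ≤ ‖μ - (lamStar : ℂ)‖ →
          ∀ i : ℕ, 1 ≤ i →
            ‖1 -
                (((P i : ℝ) : ℂ) - μ) / ((lamStar : ℂ) - μ) *
                  En i (((lamStar : ℂ) - ((lam (2 * i) : ℝ) : ℂ)) / ((lamStar : ℂ) - μ))‖
              ≤ M i := by
  have hle : ∀ n, lam n ≤ lamStar := hmono.monotone.ge_of_tendsto hlim
  have hgap0 : ∀ i, 0 ≤ lam (2 * i) - lam (2 * i - 1) :=
    fun i => sub_nonneg.mpr (hmono.monotone (by omega))
  have hgap : Summable fun i => lam (2 * i) - lam (2 * i - 1) :=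
    (summable_nat_add_iff 1).mp (hd.congr fun k => rfl)
  have hnear : ∀ᶠ i in atTop, lamStar - lam (2 * i) ≤ D / 2 :=
    ((hlim.comp (tendsto_id.const_mul_atTop' two_pos)).eventually
      (eventually_ge_nhds (by linarith : lamStar - D / 2 < lamStar))).mono
      fun i hi => by simp only [Function.comp_apply, id] at hi; linarith
  -- At `i = 0` the truncated `2 * i - 1` is `0`; the index `0` is irrelevant to the claim.
  obtain ⟨M, hMsum, hM0, hM⟩ := exists_summable_bound_of_eventually_le
    (p := fun i (x : ℝ × ℂ) => lam (2 * i - 1) ≤ x.1 ∧ x.1 ≤ lam (2 * i) ∧ D ≤ ‖x.2 - lamStar‖)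
    (f := fun i x => ‖1 - ((x.1 : ℂ) - x.2) / ((lamStar : ℂ) - x.2) *
      En i (((lamStar : ℂ) - (lam (2 * i) : ℂ)) / ((lamStar : ℂ) - x.2))‖)
    (g := fun i => 4 * (1 / 2) ^ (i + 1) + 6 * ((lam (2 * i) - lam (2 * i - 1)) / D))
    (fun i => ⟨_, fun x ⟨hc, hp, hμ⟩ => norm_one_sub_div_mul_En_le hD hμ
      ((hmono.monotone (Nat.zero_le _)).trans hc) (hp.trans (hle _))
      (hmono.monotone (Nat.zero_le _)) (hle _) i⟩)
    ((((summable_nat_add_iff 1).mpr summable_geometric_two).mul_left 4).add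
      ((hgap.div_const D).mul_left 6))
    (fun i => by have := hgap0 i; positivity)
    (hnear.mono fun i hi x ⟨hc, hp, hμ⟩ =>
      norm_one_sub_div_mul_En_le_of_near hD hμ hc hp (hle _) hi i)
  refine ⟨M, hMsum, hM0, fun P hP μ hμ i hi => ?_⟩
  obtain ⟨j, rfl⟩ := Nat.exists_eq_add_of_le' hi
  exact hM (j + 1) (P (j + 1), μ) ⟨(hP j).1, (hP j).2, hμ⟩

/-- Uniform summable domination of the Weierstrass–Runge factors: there is a summable
sequence `(M_i)` of nonnegative reals, depending only on `(λ_i)`, `λ_*` and `D`, such that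
`|1 − ((P_i − μ)/(λ_* − μ))·E_i((λ_* − λ_{2i})/(λ_* − μ))| ≤ M_i` for all admissible `(P_i)`,
all `μ` with `|μ − λ_*| ≥ D`, and all `i ≥ 1`. -/
theorem exists_summable_dominating_sequence
    (lam : ℕ → ℝ) (lamStar : ℝ) (hmono : StrictMono lam) (hpos : ∀ i, 0 < lam i)
    (hlim : Tendsto lam atTop (nhds lamStar))
    (hd : Summable (fun k : ℕ => lam (2 * k + 2) - lam (2 * k + 1)))
    (D : ℝ) (hD : 0 < D) :
    ∃ M : ℕ → ℝ, Summable M ∧ (∀ i, 0 ≤ M i) ∧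
      ∀ P : ℕ → ℝ, (∀ i : ℕ, lam (2 * i + 1) ≤ P (i + 1) ∧ P (i + 1) ≤ lam (2 * i + 2)) →
        ∀ μ : ℂ, D ≤ ‖μ - (lamStar : ℂ)‖ →
          ∀ i : ℕ, 1 ≤ i →
            ‖1 -
                (((P i : ℝ) : ℂ) - μ) / ((lamStar : ℂ) - μ) *
                  En i (((lamStar : ℂ) - ((lam (2 * i) : ℝ) : ℂ)) / ((lamStar : ℂ) - μ))‖
              ≤ M i :=
  exists_summable_dominating_sequence_general lam lamStar hmono hlim hd D hD
end

section
/- Let (λ_i)_{i≥0} be a strictly increasing sequence of positive reals with d_k = λ_{2k} − λ_{2k−1} satisfying ∑_{k=1}^∞ d_k < ∞, and let (P_k)_{k≥1} satisfy λ_{2k−1} ≤ P_k ≤ λ_{2k} for all k. Then ∑_{k=1}^∞ |1 − √(λ_{2k−1}λ_{2k})/P_k| ≤ (1/λ_1)·∑_{k=1}^∞ d_k < ∞, and consequently the infinite product ∏_{k=1}^∞ √(λ_{2k−1}λ_{2k})/P_k converges to a strictly positive real number. -/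
/-! Each factor `√(λ_{2k−1}λ_{2k}) / P_k` is a ratio of two points of `[λ_{2k−1}, λ_{2k}]`, the
denominator being at least `λ_1`, so it differs from `1` by at most `d_k / λ_1`. Absolute
summability of `x_k − 1` for positive `x_k` makes `log x_k` summable, and the product is then the
exponential of a convergent series. -/

open Set

lemma Real.sqrt_mul_mem_Icc {a b : ℝ} (ha : 0 ≤ a) (hab : a ≤ b) : √(a * b) ∈ Icc a b := by
  constructor
  · calc a = √(a * a) := (Real.sqrt_mul_self ha).symm
      _ ≤ √(a * b) := Real.sqrt_le_sqrt (mul_le_mul_of_nonneg_left hab ha)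
  · calc √(a * b) ≤ √(b * b) := Real.sqrt_le_sqrt (mul_le_mul_of_nonneg_right hab (ha.trans hab))
      _ = b := Real.sqrt_mul_self (ha.trans hab)

lemma abs_one_sub_div_le_of_mem_Icc {a b c x y : ℝ} (hc : 0 < c) (hcy : c ≤ y)
    (hx : x ∈ Icc a b) (hy : y ∈ Icc a b) : |1 - x / y| ≤ (b - a) / c := by
  have hy0 : 0 < y := hc.trans_le hcy
  have hdiff : |y - x| ≤ b - a :=
    abs_sub_le_iff.2 ⟨by linarith [hx.1, hy.2], by linarith [hx.2, hy.1]⟩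
  calc |1 - x / y| = |y - x| / y := by rw [one_sub_div hy0.ne', abs_div, abs_of_pos hy0]
    _ ≤ (b - a) / c := div_le_div₀ (by linarith [hx.1, hx.2]) hdiff hc hcy

lemma Real.multipliable_and_tprod_pos_of_summable_abs_one_sub {ι : Type*} {f : ι → ℝ}
    (hf : ∀ i, 0 < f i) (hsum : Summable fun i ↦ |1 - f i|) :
    Multipliable f ∧ 0 < ∏' i, f i := by
  have hsub : Summable fun i ↦ f i - 1 := by
    refine Summable.of_abs (hsum.congr fun i ↦ ?_)
    rw [abs_sub_comm]
  have hlog : Summable fun i ↦ Real.log (f i) := by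
    simpa using Real.summable_log_one_add_of_summable hsub
  exact ⟨Real.multipliable_of_summable_log hf hlog,
    Real.rexp_tsum_eq_tprod hf hlog ▸ Real.exp_pos _⟩

/-- With `d_k = λ_{2k} − λ_{2k−1}` summable and `λ_{2k−1} ≤ P_k ≤ λ_{2k}`, one has
`∑_{k=1}^∞ |1 − √(λ_{2k−1}λ_{2k})/P_k| ≤ (1/λ_1)·∑_{k=1}^∞ d_k < ∞`, and consequently the
infinite product `∏_{k=1}^∞ √(λ_{2k−1}λ_{2k})/P_k` converges to a strictly positive real. -/
theorem sum_abs_one_sub_sqrt_div_P_le_and_tprod_pos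
    (lam : ℕ → ℝ) (hmono : StrictMono lam) (hpos : ∀ i, 0 < lam i)
    (hd : Summable (fun k : ℕ => lam (2 * k + 2) - lam (2 * k + 1)))
    (P : ℕ → ℝ) (hP : ∀ k : ℕ, lam (2 * k + 1) ≤ P (k + 1) ∧ P (k + 1) ≤ lam (2 * k + 2)) :
    Summable (fun k : ℕ => |1 - Real.sqrt (lam (2 * k + 1) * lam (2 * k + 2)) / P (k + 1)|) ∧
    (∑' k : ℕ, |1 - Real.sqrt (lam (2 * k + 1) * lam (2 * k + 2)) / P (k + 1)| ≤
      (1 / lam 1) * ∑' k : ℕ, (lam (2 * k + 2) - lam (2 * k + 1))) ∧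
    Multipliable (fun k : ℕ => Real.sqrt (lam (2 * k + 1) * lam (2 * k + 2)) / P (k + 1)) ∧
    0 < ∏' k : ℕ, Real.sqrt (lam (2 * k + 1) * lam (2 * k + 2)) / P (k + 1) := by
  have hbound : ∀ k : ℕ, |1 - Real.sqrt (lam (2 * k + 1) * lam (2 * k + 2)) / P (k + 1)| ≤
      (1 / lam 1) * (lam (2 * k + 2) - lam (2 * k + 1)) := fun k ↦ by
    have hP1 : lam 1 ≤ P (k + 1) := (hmono.monotone (by omega)).trans (hP k).1
    rw [one_div_mul_eq_div]
    exact abs_one_sub_div_le_of_mem_Icc (hpos 1) hP1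
      (Real.sqrt_mul_mem_Icc (hpos _).le ((hP k).1.trans (hP k).2)) (hP k)
  have hsum := Summable.of_nonneg_of_le (fun _ ↦ abs_nonneg _) hbound (hd.mul_left _)
  have hfactor_pos : ∀ k : ℕ, 0 < Real.sqrt (lam (2 * k + 1) * lam (2 * k + 2)) / P (k + 1) :=
    fun k ↦ div_pos (Real.sqrt_pos.2 (mul_pos (hpos _) (hpos _))) ((hpos _).trans_le (hP k).1)
  exact ⟨hsum, (hsum.tsum_le_tsum hbound (hd.mul_left _)).trans_eq tsum_mul_left,
    Real.multipliable_and_tprod_pos_of_summable_abs_one_sub hfactor_pos hsum⟩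
end

section
/- Let y, f₁ : ℝ × ℝ → ℝ be infinitely differentiable and let c₁, c₂ ∈ ℝ. Suppose that for all (t,x) ∈ ℝ²: (i) c₁·y(t,x) + c₂ = 2f₁(t,x) − (1/2)f_{1,xx}(t,x), and (ii) y_t(t,x) = y_x(t,x)·f₁(t,x) + 2y(t,x)·f_{1,x}(t,x) (the generalized Camassa–Holm equation). Define U₁(t,x,μ) = f₁(t,x)·μ + c₁. Then the Camassa–Holm-hierarchy relation 2μ²·y_t(t,x) = 2μ·y_x(t,x)·U₁(t,x,μ) − 4(1 − μ·y(t,x))·∂_x U₁(t,x,μ) + ∂_x³ U₁(t,x,μ) holds for all (t,x) ∈ ℝ² and all μ ∈ ℝ. -/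
lemma iter_deriv_mul_const (g : ℝ → ℝ) (hg : ContDiff ℝ ((⊤ : ℕ∞) : WithTop ℕ∞) g) (μ : ℝ) :
    ∀ n : ℕ, deriv^[n] (fun s => g s * μ) = fun s => deriv^[n] g s * μ := by
  intro n
  induction n with
  | zero => rfl
  | succ k ih =>
    rw [Function.iterate_succ_apply', ih]
    funext s
    rw [deriv_mul_const ((hg.iterate_deriv k).differentiable (by simp) s) μ,
      ← Function.iterate_succ_apply' deriv k g]

lemma mul_const_add_const_iter_deriv (g : ℝ → ℝ)
    (hg : ContDiff ℝ ((⊤ : ℕ∞) : WithTop ℕ∞) g) (μ c : ℝ) (n : ℕ) (hn : 1 ≤ n) :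
    deriv^[n] (fun s => g s * μ + c) = fun s => deriv^[n] g s * μ := by
  obtain ⟨m, rfl⟩ : ∃ m, n = m + 1 := ⟨n - 1, (Nat.succ_pred_eq_of_pos hn).symm⟩
  have hd1 : deriv (fun s => g s * μ + c) = fun s => deriv g s * μ := by
    funext s
    rw [deriv_add_const]
    exact deriv_mul_const (hg.differentiable (by simp) s) μ
  have hdg : ContDiff ℝ ((⊤ : ℕ∞) : WithTop ℕ∞) (deriv g) := (contDiff_infty_iff_deriv.mp hg).2
  rw [Function.iterate_succ_apply, hd1, iter_deriv_mul_const (deriv g) hdg μ m]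
  funext s
  rw [← Function.iterate_succ_apply deriv m g]

/-- If `c₁y + c₂ = 2f₁ − (1/2)f_{1,xx}` and `y_t = y_x f₁ + 2y f_{1,x}` (the generalized
Camassa–Holm equation), then with `U₁(t,x,μ) = f₁(t,x)μ + c₁` the Camassa–Holm-hierarchy
relation `2μ² y_t = 2μ y_x U₁ − 4(1 − μy) ∂_x U₁ + ∂_x³ U₁` holds for all `(t,x,μ)`. -/
theorem camassa_holm_relation_of_generalized_CH
    (y f₁ : ℝ → ℝ → ℝ)
    (hy : ContDiff ℝ (⊤ : ℕ∞) (Function.uncurry y)) (hf : ContDiff ℝ (⊤ : ℕ∞) (Function.uncurry f₁))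
    (c₁ c₂ : ℝ)
    (h1 : ∀ t x : ℝ, c₁ * y t x + c₂ = 2 * f₁ t x - 1 / 2 * deriv^[2] (fun s => f₁ t s) x)
    (h2 : ∀ t x : ℝ, deriv (fun s => y s x) t =
      deriv (fun s => y t s) x * f₁ t x + 2 * y t x * deriv (fun s => f₁ t s) x) :
    ∀ t x μ : ℝ,
      2 * μ ^ 2 * deriv (fun s => y s x) t =
        2 * μ * deriv (fun s => y t s) x * (f₁ t x * μ + c₁)
          - 4 * (1 - μ * y t x) * deriv (fun s => f₁ t s * μ + c₁) x
          + deriv^[3] (fun s => f₁ t s * μ + c₁) x := by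
  intro t x μ
  have hg : ContDiff ℝ ((⊤ : ℕ∞) : WithTop ℕ∞) (fun s => f₁ t s) :=
    (hf.of_le (by simp)).comp (contDiff_const.prodMk contDiff_id)
  have hyt : ContDiff ℝ ((⊤ : ℕ∞) : WithTop ℕ∞) (fun s => y t s) :=
    (hy.of_le (by simp)).comp (contDiff_const.prodMk contDiff_id)
  set g := fun s => f₁ t s with hgdef
  have hU1 : deriv (fun s => f₁ t s * μ + c₁) x = deriv g x * μ :=
    congrFun (mul_const_add_const_iter_deriv g hg μ c₁ 1 le_rfl) x
  have hU3 : deriv^[3] (fun s => f₁ t s * μ + c₁) x = deriv^[3] g x * μ :=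
    congrFun (mul_const_add_const_iter_deriv g hg μ c₁ 3 (by norm_num)) x
  have key : c₁ * deriv (fun s => y t s) x = 2 * deriv g x - 1 / 2 * deriv^[3] g x := by
    have he : (fun s => c₁ * y t s + c₂) = fun s => 2 * g s - 1 / 2 * deriv^[2] g s :=
      funext (h1 t)
    have hL : deriv (fun s => c₁ * y t s + c₂) x = c₁ * deriv (fun s => y t s) x := by
      rw [deriv_add_const]
      exact deriv_const_mul c₁ (hyt.differentiable (by simp) x)
    have hg2 : ContDiff ℝ ((⊤ : ℕ∞) : WithTop ℕ∞) (deriv^[2] g) := hg.iterate_deriv 2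
    have hR : deriv (fun s => 2 * g s - 1 / 2 * deriv^[2] g s) x
        = 2 * deriv g x - 1 / 2 * deriv^[3] g x := by
      rw [deriv_fun_sub ((hg.differentiable (by simp) x).const_mul 2)
        ((hg2.differentiable (by simp) x).const_mul (1/2)),
        deriv_const_mul 2 (hg.differentiable (by simp) x),
        deriv_const_mul (1/2 : ℝ) (hg2.differentiable (by simp) x),
        ← Function.iterate_succ_apply' deriv 2 g]
    rw [← hL, he, hR]
  rw [h2 t x, hU1, hU3]
  show 2 * μ ^ 2 * (deriv (fun s => y t s) x * g x + 2 * y t x * deriv g x) =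
    2 * μ * deriv (fun s => y t s) x * (g x * μ + c₁)
      - 4 * (1 - μ * y t x) * (deriv g x * μ) + deriv^[3] g x * μ
  linear_combination (-2 * μ) * key
end
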